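/- The 3-sun S_3 — the graph on vertices x_1, x_2, x_3, y_1, y_2, y_3 where {y_1, y_2, y_3} is a triangle and each x_i is adjacent exactly to y_{i} and y_{i+1} (indices mod 3) — is not a co-TT graph. -/

import Mathlib

/-- `G` is a co-TT (signed-interval) graph. -/
def IsCoTT {V : Type*} (G : SimpleGraph V) : Prop :=
  ∃ l r : V → ℝ, ∀ u v : V, u ≠ v → (G.Adj u v ↔ l u ≤ r v ∧ l v ≤ r u)

/-- The 3-sun `S₃`: vertices `x₁ = 0, x₂ = 1, x₃ = 2, y₁ = 3, y₂ = 4, y₃ = 5`;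
`{y₁, y₂, y₃}` is a triangle and each `x_i` is adjacent exactly to `y_i` and
`y_{i+1}` (indices mod 3). -/
def S3graph : SimpleGraph (Fin 6) := SimpleGraph.fromRel (fun a b =>
  (a = 3 ∧ b = 4) ∨ (a = 4 ∧ b = 5) ∨ (a = 5 ∧ b = 3) ∨
  (a = 0 ∧ b = 3) ∨ (a = 0 ∧ b = 4) ∨
  (a = 1 ∧ b = 4) ∨ (a = 1 ∧ b = 5) ∨
  (a = 2 ∧ b = 5) ∨ (a = 2 ∧ b = 3))

/-!
Orient each non-edge `uv` of a co-TT representation by whether `r u < l v` or `r v < l u`.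
Two non-edges `a₁b₁`, `a₂b₂` with `a₁ ~ b₂` and `a₂ ~ b₁` cannot be oriented alike, since
`r a₁ < l b₁ ≤ r a₂ < l b₂ ≤ r a₁`. In `S₃` the three non-edges `x₁y₃`, `x₂y₁`, `x₃y₂` pairwise
cross in this way, so two of them would have to share an orientation.
-/

def IsCoTTRep {V : Type*} (G : SimpleGraph V) (l r : V → ℝ) : Prop :=
  ∀ u v : V, u ≠ v → (G.Adj u v ↔ l u ≤ r v ∧ l v ≤ r u)

namespace IsCoTTRep

variable {V : Type*} {G : SimpleGraph V} {l r : V → ℝ}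

theorem lt_or_lt_of_not_adj (hrep : IsCoTTRep G l r) {u v : V} (hne : u ≠ v)
    (h : ¬ G.Adj u v) : r v < l u ∨ r u < l v := by
  rwa [hrep u v hne, not_and_or, not_le, not_le] at h

theorem le_of_adj (hrep : IsCoTTRep G l r) {u v : V} (h : G.Adj u v) : l v ≤ r u :=
  ((hrep u v h.ne).mp h).2

theorem not_lt_of_lt_of_adj (hrep : IsCoTTRep G l r) {a₁ b₁ a₂ b₂ : V}
    (h₁₂ : G.Adj a₁ b₂) (h₂₁ : G.Adj a₂ b₁) (h₁ : r a₁ < l b₁) : ¬ r a₂ < l b₂ := fun h₂ =>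
  (hrep.le_of_adj h₁₂).not_gt <| calc
    r a₁ < l b₁ := h₁
    _ ≤ r a₂ := hrep.le_of_adj h₂₁
    _ < l b₂ := h₂

theorem false_of_crossed_nonAdj (hrep : IsCoTTRep G l r) {a b : Fin 3 → V}
    (hne : ∀ i, a i ≠ b i) (hnadj : ∀ i, ¬ G.Adj (a i) (b i))
    (hadj : ∀ i j, i ≠ j → G.Adj (a i) (b j)) : False := by
  obtain ⟨i, j, hij, hsame⟩ :=
    Fintype.exists_ne_map_eq_of_card_lt (fun i => decide (r (a i) < l (b i))) (by simp)
  rw [decide_eq_decide] at hsame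
  by_cases hi : r (a i) < l (b i)
  · exact hrep.not_lt_of_lt_of_adj (hadj i j hij) (hadj j i hij.symm) hi (hsame.mp hi)
  · have hj : ¬ r (a j) < l (b j) := mt hsame.mpr hi
    exact hrep.not_lt_of_lt_of_adj (hadj j i hij.symm).symm (hadj i j hij).symm
      ((hrep.lt_or_lt_of_not_adj (hne i) (hnadj i)).resolve_right hi)
      ((hrep.lt_or_lt_of_not_adj (hne j) (hnadj j)).resolve_right hj)

end IsCoTTRep

instance : DecidableRel S3graph.Adj := fun a b =>
  decidable_of_iff _ (SimpleGraph.fromRel_adj _ a b).symm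

theorem S3graph_not_isCoTT : ¬ IsCoTT S3graph := fun ⟨_, _, hrep⟩ =>
  IsCoTTRep.false_of_crossed_nonAdj hrep (a := ![0, 1, 2]) (b := ![5, 3, 4])
    (by decide) (by decide) (by decide)
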